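/- Let N be a free ℤ-module of finite rank n with a skew-symmetric ℤ-valued form {·,·}, let (e₁, …, e_n) be a basis of N, and let (f₁, …, f_n) be the dual basis of M = Hom(N, ℤ), i.e. ⟨f_i, e_j⟩ = δ_{ij}. Fix k and define e'_i := −e_k if i = k and e'_i := e_i + max({e_i, e_k}, 0)·e_k otherwise; define f'_k := −f_k + Σ_j max({e_k, −e_j}, 0)·f_j and f'_i := f_i for i ≠ k. Then (f'₁, …, f'_n) is the dual basis of (e'₁, …, e'_n): ⟨f'_i, e'_j⟩ = δ_{ij} for all i, j. -/
import Mathlib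


/-- Compatibility of the cluster `A`-mutation (on the dual lattice) with cluster
`X`-mutation: if `(f_i)` is the dual basis of a basis `(e_i)` of a free ℤ-module `N`
of rank `n` with skew form `ω`, and both are mutated at index `k` by the stated
formulas, then the mutated families are again dual to each other. -/
theorem dual_basis_mutation {N : Type*} [AddCommGroup N] [Module ℤ N]
    [Module.Free ℤ N] [Module.Finite ℤ N]
    (n : ℕ) (ω : N →ₗ[ℤ] N →ₗ[ℤ] ℤ) (hskew : ∀ x y, ω x y = -ω y x)
    (e : Fin n → N) (f : Fin n → (N →ₗ[ℤ] ℤ))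
    (hind : LinearIndependent ℤ e)
    (hspan : Submodule.span ℤ (Set.range e) = ⊤)
    (hdual : ∀ i j, f i (e j) = if i = j then 1 else 0)
    (k : Fin n) :
    ∀ i j,
      (if i = k then -f k + ∑ j' : Fin n, (max (ω (e k) (-(e j'))) 0) • f j' else f i)
        (if j = k then -e k else e j + (max (ω (e j) (e k)) 0) • e k) =
      if i = j then 1 else 0 := by
  have hkk : ω (e k) (e k) = 0 := by
    have := hskew (e k) (e k); omega
  intro i j
  by_cases hi : i = k <;> by_cases hj : j = k
  · simp only [hi, hj]
    simp [LinearMap.add_apply, LinearMap.sum_apply, LinearMap.neg_apply,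
      LinearMap.smul_apply, hdual, Finset.sum_ite_eq', hkk]
  · simp only [hi]
    have hks : ω (e k) (e j) = -ω (e j) (e k) := hskew _ _
    simp [LinearMap.add_apply, LinearMap.sum_apply, LinearMap.neg_apply,
      LinearMap.smul_apply, hdual, Finset.sum_ite_eq', hkk, hj, Ne.symm hj, hks, mul_add, Finset.sum_add_distrib,
      mul_ite, mul_one, mul_zero]
  · simp only [hj]
    simp [hdual, hi, Ne.symm hi]
  · simp [hdual, hi, hj, Ne.symm hj]
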